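/- arXiv:1902.05612 — 2 statements merged into one kernel-verified Lean document; each statement's English description precedes it below -/
import Mathlib

section
/- Under the rotation-invariant sub-Gaussian measurement model with measurements yᵢ = x* Aᵢ x for a fixed x ∈ ℂⁿ, the expectation of the norm estimator satisfies E[(1/(2m))·Σ_{i=1}^m ȳᵢ yᵢ] = ‖x‖₂⁴. -/
open MeasureTheory ProbabilityTheory Matrix Complex Finset

noncomputable section

/-- The vector in `ℝ^{2n²}` of real and imaginary parts of the entries of a complex matrix. -/
def coeffVec {n : ℕ} (A : Matrix (Fin n) (Fin n) ℂ) : Fin n × Fin n × Fin 2 → ℝ :=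
  fun p => if p.2.2 = (0 : Fin 2) then (A p.1 p.2.1).re else (A p.1 p.2.1).im

/-- A real random variable is sub-Gaussian: its tails are dominated by a Gaussian tail. -/
def IsSubGaussianRV {Ω : Type} [MeasureSpace Ω] (X : Ω → ℝ) : Prop :=
  ∃ K > 0, ∀ t : ℝ, 0 ≤ t →
    (ℙ {ω | t ≤ |X ω|}).toReal ≤ 2 * Real.exp (-(t ^ 2) / K ^ 2)

/-- The rotation-invariant sub-Gaussian measurement model: the matrices `A i` are i.i.d.,
the vector of real/imaginary parts of the entries has a rotation-invariant distribution,
all one-dimensional marginals are sub-Gaussian, and each coordinate has unit variance. -/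
structure RotInvSubGaussian {Ω : Type} [MeasureSpace Ω] {n m : ℕ}
    (A : Fin m → Ω → Matrix (Fin n) (Fin n) ℂ) : Prop where
  prob : IsProbabilityMeasure (ℙ : Measure Ω)
  meas : ∀ i, Measurable fun ω => coeffVec (A i ω)
  indep : iIndepFun (fun i ω => coeffVec (A i ω)) ℙ
  ident : ∀ i j, Measure.map (fun ω => coeffVec (A i ω)) ℙ
    = Measure.map (fun ω => coeffVec (A j ω)) ℙ
  rotInv : ∀ (i : Fin m) (O : Matrix (Fin n × Fin n × Fin 2) (Fin n × Fin n × Fin 2) ℝ),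
    Oᵀ * O = 1 →
    Measure.map (fun ω => O.mulVec (coeffVec (A i ω))) ℙ
      = Measure.map (fun ω => coeffVec (A i ω)) ℙ
  subGaussian : ∀ (i : Fin m) (g : Fin n × Fin n × Fin 2 → ℝ),
    IsSubGaussianRV (fun ω => g ⬝ᵥ coeffVec (A i ω))
  unitVar : ∀ (i : Fin m) (k : Fin n × Fin n × Fin 2), ∫ ω, (coeffVec (A i ω) k) ^ 2 = 1

/-- A matrix acting on `EuclideanSpace`. -/
def mApp {n : ℕ} (M : Matrix (Fin n) (Fin n) ℂ) (v : EuclideanSpace ℂ (Fin n)) :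
    EuclideanSpace ℂ (Fin n) :=
  Matrix.toEuclideanLin M v

/-- `quadForm M u v = u* M v`. -/
def quadForm {n : ℕ} (M : Matrix (Fin n) (Fin n) ℂ) (u v : EuclideanSpace ℂ (Fin n)) : ℂ :=
  inner ℂ u (mApp M v)

/-- The spectral (operator) norm of a complex matrix. -/
def specNorm {n : ℕ} (M : Matrix (Fin n) (Fin n) ℂ) : ℝ :=
  ‖LinearMap.toContinuousLinearMap (Matrix.toEuclideanLin M)‖

/-- The outer product `q p*`. -/
def outer {n : ℕ} (q p : EuclideanSpace ℂ (Fin n)) : Matrix (Fin n) (Fin n) ℂ :=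
  Matrix.vecMulVec (fun r => q r) (fun c => starRingEnd ℂ (p c))

/-- `(1/m) Σᵢ (p* Aᵢ* q) Aᵢ − 2 q p*`. -/
def Gmat {n m : ℕ} (A : Fin m → Matrix (Fin n) (Fin n) ℂ)
    (p q : EuclideanSpace ℂ (Fin n)) : Matrix (Fin n) (Fin n) ℂ :=
  (m : ℂ)⁻¹ • (∑ i, quadForm (A i)ᴴ p q • A i) - (2 : ℂ) • outer q p

/-- Squared distance up to a global phase. -/
def distSq {n : ℕ} (z x : EuclideanSpace ℂ (Fin n)) : ℝ :=
  ‖z‖ ^ 2 + ‖x‖ ^ 2 - 2 * ‖(inner ℂ z x : ℂ)‖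

/-- The Wirtinger flow gradient of the loss `f(z) = (1/m) Σᵢ |z* Aᵢ z − x* Aᵢ x|²`. -/
def wfGrad {n m : ℕ} (A : Fin m → Matrix (Fin n) (Fin n) ℂ)
    (x z : EuclideanSpace ℂ (Fin n)) : EuclideanSpace ℂ (Fin n) :=
  (m : ℂ)⁻¹ • ∑ i,
    ((quadForm (A i)ᴴ z z - quadForm (A i)ᴴ x x) • mApp (A i) z
      + (quadForm (A i) z z - quadForm (A i) x x) • mApp (A i)ᴴ z)

/-- The spectral initialization matrix `S = (1/m) Σᵢ ȳᵢ Aᵢ` with `yᵢ = x* Aᵢ x`. -/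
def Smat {n m : ℕ} (A : Fin m → Matrix (Fin n) (Fin n) ℂ)
    (x : EuclideanSpace ℂ (Fin n)) : Matrix (Fin n) (Fin n) ℂ :=
  (m : ℂ)⁻¹ • ∑ i, starRingEnd ℂ (quadForm (A i) x x) • A i

/-- `v` is a unit right singular vector of `S` associated with the largest singular value
(which equals the spectral norm). -/
def TopRightSingVec {n : ℕ} (S : Matrix (Fin n) (Fin n) ℂ)
    (v : EuclideanSpace ℂ (Fin n)) : Prop :=
  ‖v‖ = 1 ∧ ∃ u : EuclideanSpace ℂ (Fin n), ‖u‖ = 1 ∧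
    mApp S v = (specNorm S : ℂ) • u ∧ mApp Sᴴ u = (specNorm S : ℂ) • v

end

/-!
Write `y = x* A x` through the real coefficient vector `r` of `A`: `Re y = ⟨g, r⟩` and
`Im y = ⟨h, r⟩`, where `g` and `h` are the coefficient vectors of `x x*` and `i x x*`, both of
squared length `‖x‖⁴`. Reflections of single coordinates are orthogonal, so rotation invariance
makes the off-diagonal second moments of `r` vanish, and unit variance makes `E[r r*] = 1`.
Hence `E ⟨g, r⟩² = ‖g‖²`, so `E |y|² = 2 ‖x‖⁴` for each measurement.
-/

section SecondMoments

variable {Ω ι : Type*} [MeasurableSpace Ω] {μ : Measure Ω} [Fintype ι]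

lemma memLp_two_of_integral_sq_ne_zero {f : Ω → ℝ} (hf : AEStronglyMeasurable f μ)
    (h : ∫ ω, f ω ^ 2 ∂μ ≠ 0) : MemLp f 2 μ :=
  (memLp_two_iff_integrable_sq hf).2 (Integrable.of_integral_ne_zero h)

lemma integrable_dotProduct_sq {φ : Ω → ι → ℝ} (hφ : ∀ k, MemLp (fun ω => φ ω k) 2 μ)
    (g : ι → ℝ) : Integrable (fun ω => (g ⬝ᵥ φ ω) ^ 2) μ :=
  (memLp_finsetSum _ fun k _ => (hφ k).const_mul (g k)).integrable_sq

lemma integral_dotProduct_sq {φ : Ω → ι → ℝ} (hφ : ∀ k, MemLp (fun ω => φ ω k) 2 μ)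
    (g : ι → ℝ) :
    ∫ ω, (g ⬝ᵥ φ ω) ^ 2 ∂μ = ∑ k, ∑ l, g k * g l * ∫ ω, φ ω k * φ ω l ∂μ := by
  have hprod : ∀ k l, Integrable (fun ω => φ ω k * φ ω l) μ := fun k l =>
    (hφ k).integrable_mul (hφ l)
  have hexpand : ∀ ω, (g ⬝ᵥ φ ω) ^ 2 = ∑ k, ∑ l, g k * g l * (φ ω k * φ ω l) := fun ω => by
    simp_rw [dotProduct, sq, Finset.sum_mul_sum]
    exact Finset.sum_congr rfl fun k _ => Finset.sum_congr rfl fun l _ => by ring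
  simp_rw [hexpand]
  rw [integral_finsetSum _ fun k _ => integrable_finsetSum _ fun l _ =>
    (hprod k l).const_mul (g k * g l)]
  refine Finset.sum_congr rfl fun k _ => ?_
  rw [integral_finsetSum _ fun l _ => (hprod k l).const_mul (g k * g l)]
  simp_rw [integral_const_mul]

lemma integral_mul_apply_eq_zero_of_map_orthogonal_eq [DecidableEq ι] {φ : Ω → ι → ℝ}
    (hφ : AEMeasurable φ μ)
    (hrot : ∀ O : Matrix ι ι ℝ, Oᵀ * O = 1 → μ.map (fun ω => O *ᵥ φ ω) = μ.map φ)
    {k l : ι} (hkl : k ≠ l) : ∫ ω, φ ω k * φ ω l ∂μ = 0 := by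
  set R : Matrix ι ι ℝ := diagonal fun j => if j = k then -1 else 1
  have hR : Rᵀ * R = 1 := by
    simp only [R, diagonal_transpose, diagonal_mul_diagonal, ← diagonal_one]
    congr 1; ext j; split_ifs <;> norm_num
  have hF : Continuous fun v : ι → ℝ => v k * v l := by fun_prop
  have hRφ : AEMeasurable (fun ω => R *ᵥ φ ω) μ :=
    (Continuous.measurable (f := fun v => R *ᵥ v) (by fun_prop)).comp_aemeasurable hφ
  have hflip : ∫ ω, φ ω k * φ ω l ∂μ = ∫ ω, -(φ ω k * φ ω l) ∂μ := by
    rw [← integral_map hφ hF.aestronglyMeasurable, ← hrot R hR,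
      integral_map hRφ hF.aestronglyMeasurable]
    congr 1; ext ω
    simp [R, mulVec_diagonal, hkl.symm]
  rw [integral_neg] at hflip
  linarith

lemma integral_dotProduct_sq_of_map_orthogonal_eq [DecidableEq ι] {φ : Ω → ι → ℝ}
    (hφ : AEMeasurable φ μ)
    (hrot : ∀ O : Matrix ι ι ℝ, Oᵀ * O = 1 → μ.map (fun ω => O *ᵥ φ ω) = μ.map φ)
    (hvar : ∀ k, ∫ ω, φ ω k ^ 2 ∂μ = 1) (g : ι → ℝ) :
    Integrable (fun ω => (g ⬝ᵥ φ ω) ^ 2) μ ∧ ∫ ω, (g ⬝ᵥ φ ω) ^ 2 ∂μ = ∑ k, g k ^ 2 := by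
  have hL2 : ∀ k, MemLp (fun ω => φ ω k) 2 μ := fun k =>
    memLp_two_of_integral_sq_ne_zero
      ((measurable_pi_apply k).comp_aemeasurable hφ).aestronglyMeasurable
      (by rw [hvar k]; exact one_ne_zero)
  have hmoment : ∀ k l, ∫ ω, φ ω k * φ ω l ∂μ = if k = l then 1 else 0 := by
    intro k l
    split_ifs with hkl
    · subst hkl; simpa only [sq] using hvar k
    · exact integral_mul_apply_eq_zero_of_map_orthogonal_eq hφ hrot hkl
  refine ⟨integrable_dotProduct_sq hL2 g, ?_⟩
  rw [integral_dotProduct_sq hL2]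
  simp [hmoment, sq]

end SecondMoments

lemma quadForm_eq_sum {n : ℕ} (M : Matrix (Fin n) (Fin n) ℂ) (u v : EuclideanSpace ℂ (Fin n)) :
    quadForm M u v = ∑ j, ∑ k, star (u j) * v k * M j k := by
  simp only [quadForm, mApp, PiLp.inner_apply, RCLike.inner_apply, toLpLin_apply, mulVec,
    dotProduct, Finset.sum_mul]
  exact Finset.sum_congr rfl fun j _ => Finset.sum_congr rfl fun k _ => by simp; ring

lemma re_quadForm {n : ℕ} (M : Matrix (Fin n) (Fin n) ℂ) (u v : EuclideanSpace ℂ (Fin n)) :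
    (quadForm M u v).re = coeffVec (outer u v) ⬝ᵥ coeffVec M := by
  simp only [quadForm_eq_sum, re_sum, dotProduct, Fintype.sum_prod_type, Fin.sum_univ_two]
  exact Finset.sum_congr rfl fun j _ => Finset.sum_congr rfl fun k _ => by
    simp [coeffVec, outer, vecMulVec_apply, mul_re, mul_im]; ring

lemma im_quadForm {n : ℕ} (M : Matrix (Fin n) (Fin n) ℂ) (u v : EuclideanSpace ℂ (Fin n)) :
    (quadForm M u v).im = coeffVec (I • outer u v) ⬝ᵥ coeffVec M := by
  simp only [quadForm_eq_sum, im_sum, dotProduct, Fintype.sum_prod_type, Fin.sum_univ_two]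
  exact Finset.sum_congr rfl fun j _ => Finset.sum_congr rfl fun k _ => by
    simp [coeffVec, outer, vecMulVec_apply, mul_re, mul_im]; ring

lemma sum_coeffVec_sq {n : ℕ} (W : Matrix (Fin n) (Fin n) ℂ) :
    ∑ p, coeffVec W p ^ 2 = ∑ j, ∑ k, normSq (W j k) := by
  simp [Fintype.sum_prod_type, coeffVec, normSq_apply, sq]

lemma sum_coeffVec_outer_sq {n : ℕ} (u v : EuclideanSpace ℂ (Fin n)) :
    ∑ p, coeffVec (outer u v) p ^ 2 = ‖u‖ ^ 2 * ‖v‖ ^ 2 := by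
  simp [sum_coeffVec_sq, outer, EuclideanSpace.norm_sq_eq, Finset.sum_mul_sum, vecMulVec_apply,
    normSq_mul, Complex.sq_norm]

lemma sum_coeffVec_smul_sq {n : ℕ} (c : ℂ) (W : Matrix (Fin n) (Fin n) ℂ) :
    ∑ p, coeffVec (c • W) p ^ 2 = normSq c * ∑ p, coeffVec W p ^ 2 := by
  simp [sum_coeffVec_sq, normSq_mul, Finset.mul_sum]

lemma normSq_quadForm {n : ℕ} (M : Matrix (Fin n) (Fin n) ℂ) (u v : EuclideanSpace ℂ (Fin n)) :
    normSq (quadForm M u v) =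
      (coeffVec (outer u v) ⬝ᵥ coeffVec M) ^ 2 +
        (coeffVec (I • outer u v) ⬝ᵥ coeffVec M) ^ 2 := by
  rw [normSq_apply, re_quadForm, im_quadForm, sq, sq]

lemma integral_normSq_quadForm {Ω : Type*} [MeasurableSpace Ω] {μ : Measure Ω} {n : ℕ}
    {M : Ω → Matrix (Fin n) (Fin n) ℂ} (hM : Measurable fun ω => coeffVec (M ω))
    (hrot : ∀ O : Matrix (Fin n × Fin n × Fin 2) (Fin n × Fin n × Fin 2) ℝ, Oᵀ * O = 1 →
      μ.map (fun ω => O *ᵥ coeffVec (M ω)) = μ.map fun ω => coeffVec (M ω))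
    (hvar : ∀ k, ∫ ω, coeffVec (M ω) k ^ 2 ∂μ = 1) (u v : EuclideanSpace ℂ (Fin n)) :
    Integrable (fun ω => normSq (quadForm (M ω) u v)) μ ∧
      ∫ ω, normSq (quadForm (M ω) u v) ∂μ = 2 * ‖u‖ ^ 2 * ‖v‖ ^ 2 := by
  obtain ⟨hint_re, hre⟩ :=
    integral_dotProduct_sq_of_map_orthogonal_eq hM.aemeasurable hrot hvar (coeffVec (outer u v))
  obtain ⟨hint_im, him⟩ := integral_dotProduct_sq_of_map_orthogonal_eq hM.aemeasurable hrot hvar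
    (coeffVec (I • outer u v))
  simp only [normSq_quadForm]
  refine ⟨hint_re.add hint_im, ?_⟩
  rw [integral_add hint_re hint_im, hre, him, sum_coeffVec_smul_sq, normSq_I,
    sum_coeffVec_outer_sq]
  ring

/-- Under the rotation-invariant sub-Gaussian measurement model with `yᵢ = x* Aᵢ x`,
the norm estimator satisfies `E[(1/(2m)) Σᵢ ȳᵢ yᵢ] = ‖x‖⁴`. -/
theorem expectation_norm_estimator :
    ∀ (n m : ℕ) (Ω : Type) [MeasureSpace Ω]
      (A : Fin m → Ω → Matrix (Fin n) (Fin n) ℂ) (x : EuclideanSpace ℂ (Fin n)),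
      RotInvSubGaussian A → 0 < m →
      ∫ ω, (2 * (m : ℝ))⁻¹ * ∑ i, Complex.normSq (quadForm (A i ω) x x) = ‖x‖ ^ 4 := by
  intro n m Ω _ A x hA hm
  have hy i := integral_normSq_quadForm (hA.meas i) (hA.rotInv i) (hA.unitVar i) x x
  rw [integral_const_mul, integral_finsetSum _ fun i _ => (hy i).1]
  simp only [(hy _).2, Finset.sum_const, Finset.card_univ, Fintype.card_fin, nsmul_eq_mul]
  field_simp [hm.ne']
end

section
/- Fix ν > 0, ρ > 0, and matrices A₁, …, A_m ∈ ℂ^{n×n} such that ‖(1/m)·Σ_{i=1}^m (p* Aᵢ* q)·Aᵢ − 2 q p*‖ < ν for all unit vectors p, q ∈ ℂⁿ. Define g(z) = (1/m)·Σ_{i=1}^m [(z* Aᵢ* z − x* Aᵢ* x)·Aᵢ z + (z* Aᵢ z − x* Aᵢ x)·Aᵢ* z]. Then for all h, x ∈ ℂⁿ with h* x real and ‖h‖₂/‖x‖₂ ≤ ρ, taking z = x + h: Re(⟨h, g(z)⟩) ≥ c₁(ν, ρ)·‖h‖₂²·‖x‖₂², where c₁(ν, ρ) = 4·(1 − ρ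 − (ν/2)·(2 + 3ρ + ρ²)). -/
open MeasureTheory ProbabilityTheory Matrix Complex Finset

/-!
Write `z = x + h`. Expanding the quadratic forms, `Re ⟨h, g(z)⟩` is a combination of nine averages
`(1/m) Σᵢ conj(a* Aᵢ b) (u* Aᵢ v)` with `a, b, u, v ∈ {x, h}`. Such an average minus
`2 ⟨u, a⟩ ⟨b, v⟩` is `u* G v` for `G = (1/m) Σᵢ (b* Aᵢ* a) Aᵢ - 2 a b*`, whose spectral norm is
at most `ν ‖a‖ ‖b‖` by the hypothesis and homogeneity. With `t = h* x` real, the main terms add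
up to `4 ‖h‖² ‖x‖² + 4 t² + 12 t ‖h‖² + 4 ‖h‖⁴` and the errors to at most
`ν (4 ‖h‖² ‖x‖² + 6 ‖h‖³ ‖x‖ + 2 ‖h‖⁴)`; an elementary estimate using `|t| ≤ ‖h‖ ‖x‖` and
`‖h‖ ≤ ρ ‖x‖` finishes the proof.
-/

open scoped ComplexConjugate InnerProductSpace

section

variable {n m : ℕ}

lemma quadForm_conjTranspose (M : Matrix (Fin n) (Fin n) ℂ) (u v : EuclideanSpace ℂ (Fin n)) :
    quadForm Mᴴ u v = conj (quadForm M v u) := by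
  rw [quadForm, mApp, toEuclideanLin_conjTranspose_eq_adjoint, LinearMap.adjoint_inner_right]
  exact (inner_conj_symm _ _).symm

lemma quadForm_add_left (M : Matrix (Fin n) (Fin n) ℂ) (u u' v : EuclideanSpace ℂ (Fin n)) :
    quadForm M (u + u') v = quadForm M u v + quadForm M u' v :=
  inner_add_left _ _ _

lemma quadForm_add_right (M : Matrix (Fin n) (Fin n) ℂ) (u v v' : EuclideanSpace ℂ (Fin n)) :
    quadForm M u (v + v') = quadForm M u v + quadForm M u v' := by
  simp only [quadForm, mApp, map_add, inner_add_right]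

lemma quadForm_smul_smul (M : Matrix (Fin n) (Fin n) ℂ) (c d : ℂ) (u v : EuclideanSpace ℂ (Fin n)) :
    quadForm M (c • u) (d • v) = conj c * d * quadForm M u v := by
  simp only [quadForm, mApp, map_smul, inner_smul_left, inner_smul_right]
  ring

lemma norm_quadForm_le (M : Matrix (Fin n) (Fin n) ℂ) (u v : EuclideanSpace ℂ (Fin n)) :
    ‖quadForm M u v‖ ≤ specNorm M * ‖u‖ * ‖v‖ :=
  calc ‖quadForm M u v‖ ≤ ‖u‖ * ‖mApp M v‖ := norm_inner_le_norm _ _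
    _ ≤ ‖u‖ * (specNorm M * ‖v‖) :=
      mul_le_mul_of_nonneg_left ((toEuclideanLin M).toContinuousLinearMap.le_opNorm v)
        (norm_nonneg u)
    _ = specNorm M * ‖u‖ * ‖v‖ := by ring

lemma mApp_outer (p q v : EuclideanSpace ℂ (Fin n)) :
    mApp (outer q p) v = ⟪p, v⟫_ℂ • q := by
  ext i
  simp only [mApp, outer, ofLp_toLpLin, toLin'_apply, mulVec, dotProduct, vecMulVec_apply,
    PiLp.inner_apply, RCLike.inner_apply, PiLp.smul_apply, smul_eq_mul, Finset.sum_mul]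
  exact Finset.sum_congr rfl fun j _ => by ring

lemma quadForm_outer (p q u v : EuclideanSpace ℂ (Fin n)) :
    quadForm (outer q p) u v = ⟪u, q⟫_ℂ * ⟪p, v⟫_ℂ := by
  rw [quadForm, mApp_outer, inner_smul_right, mul_comm]

lemma outer_smul (c d : ℂ) (p q : EuclideanSpace ℂ (Fin n)) :
    outer (d • q) (c • p) = (conj c * d) • outer q p := by
  ext i j
  simp only [outer, Matrix.vecMulVec_apply, PiLp.smul_apply, smul_eq_mul, map_mul,
    Matrix.smul_apply]
  ring

lemma specNorm_smul (c : ℂ) (M : Matrix (Fin n) (Fin n) ℂ) :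
    specNorm (c • M) = ‖c‖ * specNorm M := by
  simp only [specNorm, map_smul, norm_smul]

lemma Gmat_smul (A : Fin m → Matrix (Fin n) (Fin n) ℂ) (c d : ℂ)
    (p q : EuclideanSpace ℂ (Fin n)) :
    Gmat A (c • p) (d • q) = (conj c * d) • Gmat A p q := by
  simp only [Gmat, quadForm_smul_smul, outer_smul, smul_sub, smul_comm _ (2 : ℂ),
    Finset.smul_sum, smul_smul, mul_comm (conj c * d), mul_assoc]

lemma Gmat_zero_left (A : Fin m → Matrix (Fin n) (Fin n) ℂ) (q : EuclideanSpace ℂ (Fin n)) :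
    Gmat A 0 q = 0 := by
  simpa using Gmat_smul A 0 1 0 q

lemma Gmat_zero_right (A : Fin m → Matrix (Fin n) (Fin n) ℂ) (p : EuclideanSpace ℂ (Fin n)) :
    Gmat A p 0 = 0 := by
  simpa using Gmat_smul A 1 0 p 0

lemma specNorm_Gmat_le {ν : ℝ} (A : Fin m → Matrix (Fin n) (Fin n) ℂ)
    (hA : ∀ p q : EuclideanSpace ℂ (Fin n), ‖p‖ = 1 → ‖q‖ = 1 → specNorm (Gmat A p q) < ν)
    (p q : EuclideanSpace ℂ (Fin n)) :
    specNorm (Gmat A p q) ≤ ν * ‖p‖ * ‖q‖ := by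
  rcases eq_or_ne p 0 with rfl | hp
  · simp [Gmat_zero_left, specNorm]
  rcases eq_or_ne q 0 with rfl | hq
  · simp [Gmat_zero_right, specNorm]
  have hp₀ : ‖(‖p‖⁻¹ : ℂ) • p‖ = 1 := norm_smul_inv_norm hp
  have hq₀ : ‖(‖q‖⁻¹ : ℂ) • q‖ = 1 := norm_smul_inv_norm hq
  have hpq : Gmat A p q = (conj (‖p‖ : ℂ) * ‖q‖) • Gmat A ((‖p‖⁻¹ : ℂ) • p) ((‖q‖⁻¹ : ℂ) • q) := by
    rw [← Gmat_smul, smul_inv_smul₀ (by simpa using hp), smul_inv_smul₀ (by simpa using hq)]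
  rw [hpq, specNorm_smul]
  simp only [norm_mul, RCLike.norm_conj, Complex.norm_real, norm_norm]
  linarith [mul_le_mul_of_nonneg_left (hA _ _ hp₀ hq₀).le
    (mul_nonneg (norm_nonneg p) (norm_nonneg q))]

noncomputable def empCorr (A : Fin m → Matrix (Fin n) (Fin n) ℂ)
    (a b u v : EuclideanSpace ℂ (Fin n)) : ℂ :=
  (m : ℂ)⁻¹ * ∑ i, conj (quadForm (A i) a b) * quadForm (A i) u v

lemma quadForm_Gmat (A : Fin m → Matrix (Fin n) (Fin n) ℂ) (p q u v : EuclideanSpace ℂ (Fin n)) :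
    quadForm (Gmat A p q) u v = empCorr A q p u v - 2 * (⟪u, q⟫_ℂ * ⟪p, v⟫_ℂ) := by
  simp only [empCorr, ← quadForm_conjTranspose, ← quadForm_outer]
  simp only [Gmat, quadForm, mApp, map_sub, map_smul, map_sum, LinearMap.sub_apply,
    LinearMap.smul_apply, LinearMap.sum_apply, inner_sub_right, inner_smul_right, inner_sum]

lemma norm_empCorr_sub_le {ν : ℝ} (A : Fin m → Matrix (Fin n) (Fin n) ℂ)
    (hA : ∀ p q : EuclideanSpace ℂ (Fin n), ‖p‖ = 1 → ‖q‖ = 1 → specNorm (Gmat A p q) < ν)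
    (a b u v : EuclideanSpace ℂ (Fin n)) :
    ‖empCorr A a b u v - 2 * (⟪u, a⟫_ℂ * ⟪b, v⟫_ℂ)‖ ≤ ν * (‖a‖ * ‖b‖ * ‖u‖ * ‖v‖) := by
  rw [← quadForm_Gmat]
  calc _ ≤ specNorm (Gmat A b a) * ‖u‖ * ‖v‖ := norm_quadForm_le _ _ _
    _ ≤ ν * ‖b‖ * ‖a‖ * ‖u‖ * ‖v‖ := by gcongr; exact specNorm_Gmat_le A hA b a
    _ = ν * (‖a‖ * ‖b‖ * ‖u‖ * ‖v‖) := by ring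

lemma le_re_empCorr {ν : ℝ} (A : Fin m → Matrix (Fin n) (Fin n) ℂ)
    (hA : ∀ p q : EuclideanSpace ℂ (Fin n), ‖p‖ = 1 → ‖q‖ = 1 → specNorm (Gmat A p q) < ν)
    {a b u v : EuclideanSpace ℂ (Fin n)} {s t : ℝ} (hs : ⟪u, a⟫_ℂ = s) (ht : ⟪b, v⟫_ℂ = t) :
    2 * s * t - ν * (‖a‖ * ‖b‖ * ‖u‖ * ‖v‖) ≤ (empCorr A a b u v).re := by
  have := (Complex.abs_re_le_norm _).trans (norm_empCorr_sub_le A hA a b u v)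
  rw [hs, ht, show (2 : ℂ) * (s * t) = ((2 * s * t : ℝ) : ℂ) by push_cast; ring, Complex.sub_re,
    Complex.ofReal_re] at this
  linarith [(abs_le.mp this).1]

lemma re_inner_wfGrad (A : Fin m → Matrix (Fin n) (Fin n) ℂ) (x z h : EuclideanSpace ℂ (Fin n)) :
    (⟪h, wfGrad A x z⟫_ℂ).re = ((m : ℂ)⁻¹ * ∑ i, conj (quadForm (A i) z z - quadForm (A i) x x)
      * (quadForm (A i) h z + quadForm (A i) z h)).re := by
  have hm : (m : ℂ)⁻¹ = ((m⁻¹ : ℝ) : ℂ) := by push_cast; rfl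
  simp only [wfGrad, inner_smul_right, inner_sum, inner_add_right, hm, Complex.re_ofReal_mul,
    Complex.re_sum]
  congr 1
  refine Finset.sum_congr rfl fun i _ => ?_
  change ((quadForm (A i)ᴴ z z - quadForm (A i)ᴴ x x) * quadForm (A i) h z
    + (quadForm (A i) z z - quadForm (A i) x x) * quadForm (A i)ᴴ h z).re = _
  rw [quadForm_conjTranspose, quadForm_conjTranspose, quadForm_conjTranspose, ← map_sub]
  simp only [Complex.add_re, Complex.add_im, Complex.mul_re, Complex.conj_re, Complex.conj_im]
  ring

lemma re_inner_wfGrad_add (A : Fin m → Matrix (Fin n) (Fin n) ℂ) (x h : EuclideanSpace ℂ (Fin n)) :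
    (⟪h, wfGrad A x (x + h)⟫_ℂ).re = (empCorr A h x h x + empCorr A h x x h + empCorr A x h h x
      + empCorr A x h x h + 2 * empCorr A h x h h + 2 * empCorr A x h h h + empCorr A h h h x
      + empCorr A h h x h + 2 * empCorr A h h h h).re := by
  rw [re_inner_wfGrad]
  congr 1
  simp only [empCorr, Finset.mul_sum, ← Finset.sum_add_distrib]
  refine Finset.sum_congr rfl fun i _ => ?_
  simp only [quadForm_add_left, quadForm_add_right, map_add, map_sub]
  ring

end

lemma quartic_nonneg_of_neg_mul_le {a b c : ℝ} (hb : 0 ≤ b) (ha : -(b * c) ≤ a) :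
    0 ≤ a ^ 2 + 3 * a * b ^ 2 + b ^ 4 + b ^ 3 * c := by
  rcases le_or_gt 0 (a + 3 * b ^ 2 - b * c) with hpos | hneg
  · -- `a² + 3ab² ≥ b²c² - 3b³c`, leaving `b²(c - b)²`
    nlinarith [mul_nonneg (show 0 ≤ a + b * c by linarith) hpos, sq_nonneg (b * (b - c))]
  · -- here `2c > 3b`, and `a² + 3ab² ≥ -9b⁴/4` is absorbed by `b³c`
    have h2c : 3 * b < 2 * c := by nlinarith
    nlinarith [sq_nonneg (2 * a + 3 * b ^ 2),
      mul_nonneg (pow_nonneg hb 3) (by linarith : 0 ≤ 2 * c - 3 * b)]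

lemma c₁_mul_le {a b c ν ρ : ℝ} (hν : 0 ≤ ν) (hb : 0 ≤ b) (hc : 0 ≤ c) (hbc : b ≤ ρ * c)
    (ha : -(b * c) ≤ a) :
    4 * (1 - ρ - ν / 2 * (2 + 3 * ρ + ρ ^ 2)) * b ^ 2 * c ^ 2
      ≤ 4 * b ^ 2 * c ^ 2 + 4 * a ^ 2 + 12 * a * b ^ 2 + 4 * b ^ 4
        - ν * (4 * b ^ 2 * c ^ 2 + 6 * b ^ 3 * c + 2 * b ^ 4) := by
  have hb3 : b ^ 3 * c ≤ ρ * b ^ 2 * c ^ 2 := by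
    nlinarith [mul_le_mul_of_nonneg_left hbc (mul_nonneg (sq_nonneg b) hc)]
  have hb4 : b ^ 4 ≤ ρ ^ 2 * b ^ 2 * c ^ 2 := by
    nlinarith [mul_le_mul_of_nonneg_left (pow_le_pow_left₀ hb hbc 2) (sq_nonneg b)]
  nlinarith [quartic_nonneg_of_neg_mul_le hb ha, mul_le_mul_of_nonneg_left hb3 hν,
    mul_le_mul_of_nonneg_left hb4 hν]

theorem grad_inner_lower_bound_general {n m : ℕ} (ν ρ : ℝ) (hν : 0 < ν)
    (A : Fin m → Matrix (Fin n) (Fin n) ℂ)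
    (hA : ∀ p q : EuclideanSpace ℂ (Fin n), ‖p‖ = 1 → ‖q‖ = 1 →
      specNorm (Gmat A p q) < ν)
    (h x : EuclideanSpace ℂ (Fin n)) (hreal : (inner ℂ h x : ℂ).im = 0)
    (hhx : ‖h‖ ≤ ρ * ‖x‖) :
    (inner ℂ h (wfGrad A x (x + h)) : ℂ).re
      ≥ 4 * (1 - ρ - ν / 2 * (2 + 3 * ρ + ρ ^ 2)) * ‖h‖ ^ 2 * ‖x‖ ^ 2 := by
  set a : ℝ := (⟪h, x⟫_ℂ).re
  have h_hx : ⟪h, x⟫_ℂ = a := Complex.ext (by simp [a]) (by simp [hreal])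
  have h_xh : ⟪x, h⟫_ℂ = a := by rw [← inner_conj_symm, h_hx, Complex.conj_ofReal]
  have h_hh : ⟪h, h⟫_ℂ = (‖h‖ ^ 2 : ℝ) := by push_cast; exact inner_self_eq_norm_sq_to_K h
  have h_xx : ⟪x, x⟫_ℂ = (‖x‖ ^ 2 : ℝ) := by push_cast; exact inner_self_eq_norm_sq_to_K x
  have ha : -(‖h‖ * ‖x‖) ≤ a :=
    neg_le_of_abs_le ((Complex.abs_re_le_norm _).trans (norm_inner_le_norm h x))
  rw [re_inner_wfGrad_add]
  simp only [Complex.add_re, Complex.mul_re, Complex.re_ofNat, Complex.im_ofNat, zero_mul, sub_zero]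
  linarith [le_re_empCorr A hA h_hh h_xx, le_re_empCorr A hA h_xh h_xh,
    le_re_empCorr A hA h_hx h_hx, le_re_empCorr A hA h_xx h_hh, le_re_empCorr A hA h_hh h_xh,
    le_re_empCorr A hA h_hx h_hh, le_re_empCorr A hA h_hh h_hx, le_re_empCorr A hA h_xh h_hh,
    le_re_empCorr A hA h_hh h_hh, c₁_mul_le hν.le (norm_nonneg h) (norm_nonneg x) hhx ha]

/-- Lower bound `Re⟨h, ∇f(z)⟩ ≥ c₁(ν, ρ) ‖h‖² ‖x‖²` for `z = x + h`, `‖h‖ ≤ ρ ‖x‖`,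
`h* x` real, under the uniform spectral-norm concentration hypothesis, where
`c₁(ν, ρ) = 4 (1 − ρ − (ν/2)(2 + 3ρ + ρ²))`. -/
theorem grad_inner_lower_bound {n m : ℕ} (ν ρ : ℝ) (hν : 0 < ν) (hρ : 0 < ρ)
    (A : Fin m → Matrix (Fin n) (Fin n) ℂ)
    (hA : ∀ p q : EuclideanSpace ℂ (Fin n), ‖p‖ = 1 → ‖q‖ = 1 →
      specNorm (Gmat A p q) < ν)
    (h x : EuclideanSpace ℂ (Fin n)) (hreal : (inner ℂ h x : ℂ).im = 0)
    (hhx : ‖h‖ ≤ ρ * ‖x‖) :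
    (inner ℂ h (wfGrad A x (x + h)) : ℂ).re
      ≥ 4 * (1 - ρ - ν / 2 * (2 + 3 * ρ + ρ ^ 2)) * ‖h‖ ^ 2 * ‖x‖ ^ 2 :=
  grad_inner_lower_bound_general ν ρ hν A hA h x hreal hhx
end
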